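/- Let Δ and Δ̂ be real-valued random variables on a common probability space, and let ε > 0. Then E[ |Δ| · 1{Δ̂·Δ ≤ 0} ] ≤ ε·P(|Δ| ≤ ε) + E[ |Δ̂ − Δ| · 1{|Δ̂ − Δ| ≥ ε} ], provided the expectations exist. -/

import Mathlib

/-!
On the event `{Δ̂ Δ ≤ 0}` the estimate `Δ̂` sits on the other side of `0` from `Δ`, so
`|Δ| ≤ |Δ̂ - Δ|`. Either `|Δ| ≤ ε`, and the integrand is at most `ε`, or `|Δ| > ε`, and then
`ε ≤ |Δ̂ - Δ|` and the integrand is at most `|Δ̂ - Δ|` on `{ε ≤ |Δ̂ - Δ|}`. Integrating this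
pointwise bound gives the claim.
-/

open MeasureTheory

theorem abs_le_abs_sub_of_mul_nonpos {α : Type*} [CommRing α] [LinearOrder α]
    [IsStrictOrderedRing α] {a b : α} (h : b * a ≤ 0) : |a| ≤ |b - a| := by
  rw [← sq_le_sq]
  nlinarith [sq_nonneg b]

theorem abs_mul_indicator_mul_nonpos_le {Ω : Type*} (f g : Ω → ℝ) {ε : ℝ} (hε : 0 ≤ ε) (ω : Ω) :
    |f ω| * Set.indicator {ω' | g ω' * f ω' ≤ 0} (fun _ => (1 : ℝ)) ω ≤
      ε * Set.indicator {ω' | |f ω'| ≤ ε} (fun _ => (1 : ℝ)) ω +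
        |g ω - f ω| * Set.indicator {ω' | ε ≤ |g ω' - f ω'|} (fun _ => (1 : ℝ)) ω := by
  simp only [Set.indicator_apply, Set.mem_ofPred_eq]
  have hdiff := abs_nonneg (g ω - f ω)
  by_cases hsign : g ω * f ω ≤ 0
  · have hclose := abs_le_abs_sub_of_mul_nonpos hsign
    split_ifs <;> linarith
  · split_ifs <;> linarith

theorem integral_const_mul_indicator_one {Ω : Type*} [MeasurableSpace Ω] (μ : Measure Ω)
    {s : Set Ω} (hs : MeasurableSet s) (c : ℝ) :
    ∫ ω, c * s.indicator (fun _ => (1 : ℝ)) ω ∂μ = c * μ.real s := by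
  rw [integral_const_mul]
  exact congrArg (c * ·) (integral_indicator_one hs)

theorem regret_split_bound_general
    {Ω : Type*} [MeasurableSpace Ω] (μ : Measure Ω) [IsProbabilityMeasure μ]
    (Δ Δhat : Ω → ℝ) (hΔ : Measurable Δ)
    (ε : ℝ) (hε : 0 < ε)
    (h2 : Integrable (fun ω =>
      |Δhat ω - Δ ω| * Set.indicator {ω' | ε ≤ |Δhat ω' - Δ ω'|} (fun _ => (1 : ℝ)) ω) μ) :
    ∫ ω, |Δ ω| * Set.indicator {ω' | Δhat ω' * Δ ω' ≤ 0} (fun _ => (1 : ℝ)) ω ∂μ ≤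
      ε * (μ {ω | |Δ ω| ≤ ε}).toReal +
        ∫ ω, |Δhat ω - Δ ω| * Set.indicator {ω' | ε ≤ |Δhat ω' - Δ ω'|} (fun _ => (1 : ℝ)) ω ∂μ := by
  have hsmall : MeasurableSet {ω | |Δ ω| ≤ ε} := measurableSet_le hΔ.abs measurable_const
  have hsmall_int : Integrable
      (fun ω => ε * Set.indicator {ω' | |Δ ω'| ≤ ε} (fun _ => (1 : ℝ)) ω) μ :=
    ((integrable_const 1).indicator hsmall).const_mul ε
  have hnonneg : 0 ≤ᵐ[μ] fun ω =>
      |Δ ω| * Set.indicator {ω' | Δhat ω' * Δ ω' ≤ 0} (fun _ => (1 : ℝ)) ω :=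
    .of_forall fun ω => mul_nonneg (abs_nonneg _) (Set.indicator_nonneg (by simp) ω)
  calc _ ≤ ∫ ω, (ε * Set.indicator {ω' | |Δ ω'| ≤ ε} (fun _ => (1 : ℝ)) ω +
          |Δhat ω - Δ ω| * Set.indicator {ω' | ε ≤ |Δhat ω' - Δ ω'|} (fun _ => (1 : ℝ)) ω) ∂μ :=
        integral_mono_of_nonneg hnonneg (hsmall_int.add h2)
          (.of_forall (abs_mul_indicator_mul_nonpos_le Δ Δhat hε.le))
    _ = _ := by
        rw [integral_add hsmall_int h2, integral_const_mul_indicator_one μ hsmall]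
        rfl

theorem regret_split_bound
    {Ω : Type*} [MeasurableSpace Ω] (μ : Measure Ω) [IsProbabilityMeasure μ]
    (Δ Δhat : Ω → ℝ) (hΔ : Measurable Δ) (hΔhat : Measurable Δhat)
    (ε : ℝ) (hε : 0 < ε)
    (h1 : Integrable (fun ω =>
      |Δ ω| * Set.indicator {ω' | Δhat ω' * Δ ω' ≤ 0} (fun _ => (1 : ℝ)) ω) μ)
    (h2 : Integrable (fun ω =>
      |Δhat ω - Δ ω| * Set.indicator {ω' | ε ≤ |Δhat ω' - Δ ω'|} (fun _ => (1 : ℝ)) ω) μ) :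
    ∫ ω, |Δ ω| * Set.indicator {ω' | Δhat ω' * Δ ω' ≤ 0} (fun _ => (1 : ℝ)) ω ∂μ ≤
      ε * (μ {ω | |Δ ω| ≤ ε}).toReal +
        ∫ ω, |Δhat ω - Δ ω| * Set.indicator {ω' | ε ≤ |Δhat ω' - Δ ω'|} (fun _ => (1 : ℝ)) ω ∂μ :=
  regret_split_bound_general μ Δ Δhat hΔ ε hε h2
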